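/- Let C_n be the cycle graph on n ≥ 4 vertices and let k be an integer with 2 ≤ k ≤ ⌊n/2⌋. Then for every j ∈ {0, 1, …, n−1}, the number θ_j = 2(1 − cos(2πj/n)) = 4 sin²(jπ/n) is an eigenvalue of the Laplacian matrix L(F_k(C_n)). -/

import Mathlib

open Finset Polynomial Real Matrix

noncomputable section

/-- The `k`-token graph of a simple graph `G`. -/
def tokenGraph {V : Type*} [DecidableEq V] (G : SimpleGraph V) (k : ℕ) :
    SimpleGraph {s : Finset V // s.card = k} where
  Adj A B := ∃ a b, G.Adj a b ∧ a ∈ A.1 ∧ b ∈ B.1 ∧ symmDiff A.1 B.1 = {a, b}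
  symm := by
    constructor
    rintro A B ⟨a, b, hab, ha, hb, hd⟩
    exact ⟨b, a, hab.symm, hb, ha, by rw [symmDiff_comm, hd, Finset.pair_comm]⟩
  loopless := by
    constructor
    rintro A ⟨a, b, hab, ha, hb, hd⟩
    rw [symmDiff_self, Finset.bot_eq_empty] at hd
    exact (Finset.insert_ne_empty a {b}) hd.symm

/-- The Laplacian matrix (over ℝ) of a finite simple graph. -/
def lapMat {V : Type*} [Fintype V] [DecidableEq V] (G : SimpleGraph V) : Matrix V V ℝ :=
  letI := Classical.decRel G.Adj
  G.lapMatrix ℝ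

/-- The Laplacian matrix (over ℂ) of a finite simple graph. -/
def lapMatC {V : Type*} [Fintype V] [DecidableEq V] (G : SimpleGraph V) : Matrix V V ℂ :=
  letI := Classical.decRel G.Adj
  G.lapMatrix ℂ

/-- The Laplacian eigenvalues of `G`, with multiplicity, in nondecreasing order. -/
def lapSpec {V : Type*} [Fintype V] [DecidableEq V] (G : SimpleGraph V) : List ℝ :=
  ((lapMat G).charpoly.roots).sort (· ≤ ·)

/-- The algebraic connectivity: the second-smallest Laplacian eigenvalue. -/
def algConn {V : Type*} [Fintype V] [DecidableEq V] (G : SimpleGraph V) : ℝ :=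
  (lapSpec G).getD 1 0

/-- The largest Laplacian eigenvalue (Laplacian spectral radius). -/
def lapSpecRadius {V : Type*} [Fintype V] [DecidableEq V] (G : SimpleGraph V) : ℝ :=
  (lapSpec G).getLastD 0

/-- `μ` is an eigenvalue of the Laplacian matrix of `G`. -/
def IsLapEigen {V : Type*} [Fintype V] [DecidableEq V] (G : SimpleGraph V) (μ : ℝ) : Prop :=
  ∃ v : V → ℝ, v ≠ 0 ∧ (lapMat G).mulVec v = μ • v

/-- The induced subgraph of `G` on the complement of the vertex `i` (i.e. `G ∖ i`). -/
def deleteVert {V : Type*} (G : SimpleGraph V) (i : V) : SimpleGraph {v : V // v ≠ i} :=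
  SimpleGraph.comap Subtype.val G

/-- The cycle graph on `ℤ/nℤ`, where `i` is adjacent to `i ± 1`. -/
def cycleG (n : ℕ) : SimpleGraph (ZMod n) where
  Adj x y := x ≠ y ∧ (x - y = 1 ∨ y - x = 1)
  symm := by constructor; rintro x y ⟨hxy, h⟩; exact ⟨hxy.symm, h.symm⟩
  loopless := by constructor; rintro x ⟨hx, _⟩; exact hx rfl

/-- The inclusion matrix from `h`-subsets to `k`-subsets: rows indexed by `k`-subsets `A`,
columns by `h`-subsets `X`, with entry `1` if `X ⊆ A` and `0` otherwise. -/
def inclMatrix (V : Type*) [Fintype V] [DecidableEq V] (h k : ℕ) :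
    Matrix {s : Finset V // s.card = k} {s : Finset V // s.card = h} ℝ :=
  fun A X => if X.1 ⊆ A.1 then 1 else 0

/-- The `(n;k)`-binomial matrix: rows indexed by `k`-subsets `A`, columns by vertices `j`,
with entry `1` if `j ∈ A` and `0` otherwise. -/
def binomMatrix (V : Type*) [Fintype V] [DecidableEq V] (k : ℕ) :
    Matrix {s : Finset V // s.card = k} V ℝ :=
  fun A j => if j ∈ A.1 then 1 else 0

/-- The Kneser graph `K(n,k)`. -/
def kneserGraph (n k : ℕ) : SimpleGraph {s : Finset (Fin n) // s.card = k} where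
  Adj A B := A ≠ B ∧ Disjoint A.1 B.1
  symm := by constructor; rintro A B ⟨h1, h2⟩; exact ⟨h1.symm, h2.symm⟩
  loopless := by constructor; rintro A ⟨h1, _⟩; exact h1 rfl

end

noncomputable section

/-! The binomial matrix `B`, sending `v` to `A ↦ ∑ a ∈ A, v a`, intertwines the Laplacians:
`L(F_k G) B = B L(G)`, because at a `k`-set `A` both sides are the total difference of `v`
along the edges of `G` leaving `A` (edges inside `A` cancel, and the neighbours of `A` in
`F_k G` are exactly the results of moving one token along such an edge). For `0 < k < |V|`
the matrix `B` has trivial kernel, so every Laplacian eigenvector of `G` lifts to one of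
`F_k G`. On the cycle, `x ↦ cos (2πjx/n)` is an eigenvector with eigenvalue
`2 - 2 cos (2πj/n) = 4 sin² (jπ/n)`. -/

section TokenGraph

variable {V : Type*} [DecidableEq V]

lemma tokenGraph_adj_iff (G : SimpleGraph V) {k : ℕ} (A B : {s : Finset V // s.card = k}) :
    (tokenGraph G k).Adj A B ↔
      ∃ a ∈ A.1, ∃ b ∉ A.1, G.Adj a b ∧ B.1 = insert b (A.1.erase a) := by
  constructor
  · rintro ⟨a, b, hab, ha, hb, hsd⟩
    have hx : ∀ x, (x ∈ A.1 ∧ x ∉ B.1 ∨ x ∈ B.1 ∧ x ∉ A.1) ↔ x = a ∨ x = b := by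
      simpa [Finset.ext_iff, Finset.mem_symmDiff] using hsd
    have hbA : b ∉ A.1 := by grind
    refine ⟨a, ha, b, hbA, hab, ?_⟩
    ext x
    grind
  · rintro ⟨a, ha, b, hb, hab, hB⟩
    refine ⟨a, b, hab, ha, by simp [hB], ?_⟩
    ext x
    simp only [Finset.mem_symmDiff, hB, Finset.mem_insert, Finset.mem_erase, Finset.mem_singleton]
    grind

lemma Finset.card_insert_erase_of_mem_of_notMem {s : Finset V} {a b : V} (ha : a ∈ s)
    (hb : b ∉ s) : (insert b (s.erase a)).card = s.card := by
  rw [Finset.card_insert_of_notMem (fun h => hb (Finset.mem_of_mem_erase h)),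
    Finset.card_erase_add_one ha]

variable [Fintype V]

lemma lapMat_mulVec_apply (G : SimpleGraph V) [DecidableRel G.Adj] (v : V → ℝ) (x : V) :
    (lapMat G *ᵥ v) x = ∑ y, if G.Adj x y then v x - v y else 0 := by
  have h : lapMat G = G.lapMatrix ℝ := by unfold lapMat; congr!
  rw [h, SimpleGraph.lapMatrix_mulVec_apply, ← Finset.sum_filter,
    ← SimpleGraph.neighborFinset_eq_filter, Finset.sum_sub_distrib, Finset.sum_const,
    nsmul_eq_mul, SimpleGraph.card_neighborFinset_eq_degree]

lemma sum_lapMat_mulVec (G : SimpleGraph V) [DecidableRel G.Adj] (v : V → ℝ) (s : Finset V) :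
    ∑ a ∈ s, (lapMat G *ᵥ v) a = ∑ p ∈ s ×ˢ sᶜ with G.Adj p.1 p.2, (v p.1 - v p.2) := by
  set f : V → V → ℝ := fun a y => if G.Adj a y then v a - v y else 0
  have hf : ∀ a y, f a y = -f y a := fun a y => by
    by_cases h : G.Adj a y
    · simp [f, h, h.symm]
    · simp [f, h, show ¬G.Adj y a from fun h' => h h'.symm]
  have inside : ∑ a ∈ s, ∑ y ∈ s, f a y = 0 := by
    have := calc ∑ a ∈ s, ∑ y ∈ s, f a y = ∑ a ∈ s, ∑ y ∈ s, -f y a :=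
          Finset.sum_congr rfl fun a _ => Finset.sum_congr rfl fun y _ => hf a y
      _ = -∑ a ∈ s, ∑ y ∈ s, f a y := by rw [Finset.sum_comm]; simp
    linarith
  calc ∑ a ∈ s, (lapMat G *ᵥ v) a = ∑ a ∈ s, (∑ y ∈ s, f a y + ∑ y ∈ sᶜ, f a y) := by
        simp only [lapMat_mulVec_apply, Finset.sum_add_sum_compl, f]
    _ = ∑ p ∈ s ×ˢ sᶜ with G.Adj p.1 p.2, (v p.1 - v p.2) := by
        rw [Finset.sum_add_distrib, inside, zero_add, Finset.sum_filter, Finset.sum_product]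

lemma binomMatrix_mulVec_apply (k : ℕ) (v : V → ℝ) (A : {s : Finset V // s.card = k}) :
    (binomMatrix V k *ᵥ v) A = ∑ a ∈ A.1, v a := by
  simp [binomMatrix, Matrix.mulVec, dotProduct, Finset.sum_ite_mem]

lemma lapMat_tokenGraph_mulVec_binomMatrix_mulVec (G : SimpleGraph V) (k : ℕ) (v : V → ℝ) :
    lapMat (tokenGraph G k) *ᵥ (binomMatrix V k *ᵥ v) = binomMatrix V k *ᵥ (lapMat G *ᵥ v) := by
  classical
  funext A
  rw [binomMatrix_mulVec_apply, sum_lapMat_mulVec, lapMat_mulVec_apply, ← Finset.sum_filter]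
  refine (Finset.sum_bij (fun p hp => ⟨insert p.2 (A.1.erase p.1), ?card⟩)
    ?mem ?inj ?surj ?val).symm
  case card =>
    simp only [Finset.mem_filter, Finset.mem_product, Finset.mem_compl] at hp
    exact (Finset.card_insert_erase_of_mem_of_notMem hp.1.1 hp.1.2).trans A.2
  case mem =>
    intro p hp
    simp only [Finset.mem_filter, Finset.mem_product, Finset.mem_compl] at hp
    simpa [tokenGraph_adj_iff] using ⟨p.1, hp.1.1, p.2, hp.1.2, hp.2, rfl⟩
  case inj =>
    intro p hp q hq hpq
    simp only [Finset.mem_filter, Finset.mem_product, Finset.mem_compl] at hp hq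
    have h := Finset.ext_iff.mp (congrArg Subtype.val hpq)
    have h1 := h p.1
    have h2 := h p.2
    simp only [Finset.mem_insert, Finset.mem_erase] at h1 h2
    grind
  case surj =>
    intro B hB
    obtain ⟨a, ha, b, hb, hab, hB⟩ := (tokenGraph_adj_iff G A B).mp (Finset.mem_filter.mp hB).2
    exact ⟨(a, b), by simpa using ⟨⟨ha, hb⟩, hab⟩, Subtype.ext hB.symm⟩
  case val =>
    intro p hp
    simp only [Finset.mem_filter, Finset.mem_product, Finset.mem_compl] at hp
    rw [binomMatrix_mulVec_apply, binomMatrix_mulVec_apply,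
      Finset.sum_insert (fun h => hp.1.2 (Finset.mem_of_mem_erase h)),
      Finset.sum_erase_eq_sub hp.1.1]
    ring

/-- Comparing `insert a t` with `insert b t` shows that a vector in the kernel is constant,
and a constant `c` sums to `k c` over a `k`-set. -/
lemma binomMatrix_mulVec_eq_zero {k : ℕ} (hk0 : 0 < k) (hk : k < Fintype.card V) {v : V → ℝ}
    (hv : binomMatrix V k *ᵥ v = 0) : v = 0 := by
  have hsum (A : {s : Finset V // s.card = k}) : ∑ a ∈ A.1, v a = 0 := by
    rw [← binomMatrix_mulVec_apply, hv, Pi.zero_apply]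
  have hconst (a b : V) : v a = v b := by
    rcases eq_or_ne a b with rfl | hab
    · rfl
    obtain ⟨t, ht, htk⟩ := Finset.exists_subset_card_eq (s := {a, b}ᶜ) (n := k - 1) (by
      rw [Finset.card_compl, Finset.card_pair hab]; omega)
    have hat : a ∉ t := fun h => by simpa using ht h
    have hbt : b ∉ t := fun h => by simpa using ht h
    have hA := hsum ⟨insert a t, by rw [Finset.card_insert_of_notMem hat, htk]; omega⟩
    have hB := hsum ⟨insert b t, by rw [Finset.card_insert_of_notMem hbt, htk]; omega⟩
    rw [Finset.sum_insert hat] at hA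
    rw [Finset.sum_insert hbt] at hB
    linarith
  funext a
  obtain ⟨A, -, hA⟩ := Finset.exists_subset_card_eq (s := (Finset.univ : Finset V)) (n := k)
    (by rw [Finset.card_univ]; omega)
  have := hsum ⟨A, hA⟩
  rw [Finset.sum_congr rfl fun b _ => hconst b a, Finset.sum_const, hA, nsmul_eq_mul] at this
  exact (mul_eq_zero.mp this).resolve_left (by positivity)

theorem IsLapEigen.tokenGraph {G : SimpleGraph V} {μ : ℝ} (h : IsLapEigen G μ) {k : ℕ}
    (hk0 : 0 < k) (hk : k < Fintype.card V) : IsLapEigen (tokenGraph G k) μ := by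
  obtain ⟨v, hv0, hv⟩ := h
  refine ⟨binomMatrix V k *ᵥ v, fun h => hv0 (binomMatrix_mulVec_eq_zero hk0 hk h), ?_⟩
  rw [lapMat_tokenGraph_mulVec_binomMatrix_mulVec, hv, Matrix.mulVec_smul]

end TokenGraph

section Cycle

variable {n : ℕ} [NeZero n]

lemma lapMat_cycleG_mulVec_apply (hn : 3 ≤ n) (v : ZMod n → ℝ) (x : ZMod n) :
    (lapMat (cycleG n) *ᵥ v) x = 2 * v x - v (x - 1) - v (x + 1) := by
  classical
  have : Fact (1 < n) := ⟨by omega⟩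
  have hne : x - 1 ≠ x + 1 := fun h => by
    have h2 : ((2 : ℕ) : ZMod n) = 0 := by push_cast; linear_combination -h
    have := Nat.le_of_dvd two_pos ((ZMod.natCast_eq_zero_iff 2 n).mp h2)
    omega
  have hadj (y : ZMod n) : (cycleG n).Adj x y ↔ y = x - 1 ∨ y = x + 1 := by
    constructor
    · rintro ⟨-, h | h⟩
      · left; linear_combination -h
      · right; linear_combination h
    · rintro (rfl | rfl)
      · exact ⟨fun h => one_ne_zero (by linear_combination h : (1 : ZMod n) = 0), Or.inl (by ring)⟩
      · exact ⟨fun h => one_ne_zero (by linear_combination -h : (1 : ZMod n) = 0), Or.inr (by ring)⟩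
  have hnbrs : Finset.univ.filter ((cycleG n).Adj x) = {x - 1, x + 1} := by
    ext y; simp [hadj]
  rw [lapMat_mulVec_apply, ← Finset.sum_filter, hnbrs, Finset.sum_pair hne]
  ring

/-- `cos (θ - α) + cos (θ + α) = 2 cos θ cos α` makes `cos ∘ φ` an eigenvector. -/
lemma isLapEigen_cycleG_of_addMonoidHom (hn : 3 ≤ n) (φ : ZMod n →+ Real.Angle) :
    IsLapEigen (cycleG n) (2 - 2 * (φ 1).cos) := by
  refine ⟨fun x => (φ x).cos, fun h => by simpa using congrFun h 0, ?_⟩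
  funext x
  rw [lapMat_cycleG_mulVec_apply hn, map_sub, map_add, sub_eq_add_neg (φ x), Real.Angle.cos_add,
    Real.Angle.cos_add, Real.Angle.cos_neg, Real.Angle.sin_neg]
  simp only [Pi.smul_apply, smul_eq_mul]
  ring

theorem isLapEigen_cycleG (hn : 3 ≤ n) (j : ℕ) :
    IsLapEigen (cycleG n) (4 * Real.sin (j * π / n) ^ 2) := by
  -- `φ x = 2πjx/n` is well defined on `ℤ/nℤ` because `n • φ 1 = 2πj = 0` in `ℝ/2πℤ`
  have hper : zmultiplesHom Real.Angle ↑(2 * (j * π / n)) n = 0 := by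
    rw [zmultiplesHom_apply, natCast_zsmul, ← Real.Angle.coe_nsmul, nsmul_eq_mul,
      show (n : ℝ) * (2 * (j * π / n)) = j • (2 * π) by
        rw [nsmul_eq_mul]; field_simp [Nat.cast_ne_zero.mpr (NeZero.ne n)],
      Real.Angle.coe_nsmul, Real.Angle.coe_two_pi, smul_zero]
  have h := isLapEigen_cycleG_of_addMonoidHom hn (ZMod.lift n ⟨_, hper⟩)
  rwa [← Int.cast_one, ZMod.lift_coe, zmultiplesHom_apply, one_zsmul, Real.Angle.cos_coe,
    Real.cos_two_mul, Real.cos_sq', show 2 - 2 * (2 * (1 - Real.sin (j * π / n) ^ 2) - 1)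
      = 4 * Real.sin (j * π / n) ^ 2 by ring] at h

end Cycle

theorem stmt_13_general {n k : ℕ} [NeZero n] (hk : 2 ≤ k) (hkn : k ≤ n / 2)
    (j : ℕ) :
    IsLapEigen (tokenGraph (cycleG n) k) (4 * Real.sin ((j : ℝ) * π / (n : ℝ)) ^ 2) :=
  (isLapEigen_cycleG (by omega) j).tokenGraph (by omega) (by rw [ZMod.card]; omega)

theorem stmt_13 {n k : ℕ} [NeZero n] (hn : 4 ≤ n) (hk : 2 ≤ k) (hkn : k ≤ n / 2)
    (j : ℕ) (hj : j < n) :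
    IsLapEigen (tokenGraph (cycleG n) k) (4 * Real.sin ((j : ℝ) * π / (n : ℝ)) ^ 2) :=
  stmt_13_general hk hkn j

end
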